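/- arXiv:2411.07641 — 3 statements merged into one kernel-verified Lean document; each statement's English description precedes it below -/
import Mathlib

section
/- Let μ ∈ ℝ, σ > 0, and p ∈ (0,1), and let φ_{μ,σ²} denote the density of the normal distribution N(μ, σ²). Then the threshold t = μ + √2·σ·erf⁻¹(1 − 2p) + σ² satisfies ∫_t^{+∞} e^x φ_{μ,σ²}(x) dx = p · ∫_ℝ e^x φ_{μ,σ²}(x) dx; that is, the nucleus mass I(t)/I(−∞) equals p exactly at this threshold. -/
/-!
Multiplying the `N(μ, σ²)` density by `eˣ` and completing the square gives
`e^{μ + σ²/2}` times the `N(μ + σ², σ²)` density. Hence `I(−∞) = e^{μ + σ²/2}`, while `I(t)` is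
`e^{μ + σ²/2}` times the upper tail of `N(μ + σ², σ²)` at `t`, which equals
`(1 − erf ((t − μ − σ²)/(√2 σ)))/2`; at the given threshold this is `(1 − (1 − 2p))/2 = p`.
-/

open MeasureTheory Real

/-- The Gauss error function `erf x = (2/√π) ∫_0^x exp (-u²) du`. -/
noncomputable def erf (x : ℝ) : ℝ :=
  (2 / Real.sqrt π) * ∫ u in (0:ℝ)..x, Real.exp (-u ^ 2)

/-- The density of the normal distribution `N(μ, σ²)`. -/
noncomputable def gaussianDensity (μ σ x : ℝ) : ℝ :=
  (1 / (σ * Real.sqrt (2 * π))) * Real.exp (-(x - μ) ^ 2 / (2 * σ ^ 2))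

open Set

theorem integral_Ioi_comp_sub_right {E : Type*} [NormedAddCommGroup E] [NormedSpace ℝ E]
    (g : ℝ → E) (a m : ℝ) :
    ∫ x in Ioi a, g (x - m) = ∫ x in Ioi (a - m), g x := by
  have h := (measurePreserving_sub_right volume m).setIntegral_preimage_emb
    (MeasurableEquiv.subRight m).measurableEmbedding g (Ioi (a - m))
  rwa [preimage_sub_const_Ioi, sub_add_cancel] at h

theorem integral_Ioi_comp_sub_div {E : Type*} [NormedAddCommGroup E] [NormedSpace ℝ E]
    (g : ℝ → E) (a m : ℝ) {c : ℝ} (hc : 0 < c) :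
    ∫ x in Ioi a, g ((x - m) / c) = c • ∫ u in Ioi ((a - m) / c), g u := by
  simp only [div_eq_mul_inv]
  rw [integral_Ioi_comp_sub_right (fun x => g (x * c⁻¹)),
    integral_comp_mul_right_Ioi g _ (inv_pos.mpr hc), inv_inv]

theorem integral_Ioi_exp_neg_sq (y : ℝ) :
    ∫ u in Ioi y, exp (-u ^ 2) = √π / 2 * (1 - erf y) := by
  have hint : Integrable fun u : ℝ => exp (-u ^ 2) := by
    simpa using integrable_exp_neg_mul_sq one_pos
  have hzero : ∫ u in Ioi (0 : ℝ), exp (-u ^ 2) = √π / 2 := by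
    simpa using integral_gaussian_Ioi 1
  have hdiff := intervalIntegral.integral_Ioi_sub_Ioi' (μ := volume) (a := 0) (b := y)
    hint.integrableOn hint.integrableOn
  have hπ : √π ≠ 0 := by positivity
  rw [hzero] at hdiff
  rw [erf, ← hdiff]
  field_simp
  ring

theorem gaussianDensity_eq_mul_exp_neg_sq (m σ x : ℝ) :
    gaussianDensity m σ x = (σ * √(2 * π))⁻¹ * exp (-((x - m) / (√2 * σ)) ^ 2) := by
  rw [gaussianDensity, one_div, div_pow, mul_pow, sq_sqrt zero_le_two, neg_div]

theorem gaussianDensity_eq_gaussianPDFReal (m : ℝ) {σ : ℝ} (hσ : 0 < σ) :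
    gaussianDensity m σ = ProbabilityTheory.gaussianPDFReal m (σ ^ 2).toNNReal := by
  ext x
  rw [gaussianDensity, ProbabilityTheory.gaussianPDFReal_def, Real.coe_toNNReal _ (sq_nonneg σ), one_div,
    mul_comm (2 * π), sqrt_mul (sq_nonneg σ), sqrt_sq hσ.le]

theorem integral_gaussianDensity (m : ℝ) {σ : ℝ} (hσ : 0 < σ) :
    ∫ x, gaussianDensity m σ x = 1 := by
  rw [gaussianDensity_eq_gaussianPDFReal m hσ]
  exact ProbabilityTheory.integral_gaussianPDFReal_eq_one m
    (Real.toNNReal_pos.mpr (by positivity)).ne'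

theorem integral_Ioi_gaussianDensity (m a : ℝ) {σ : ℝ} (hσ : 0 < σ) :
    ∫ x in Ioi a, gaussianDensity m σ x = (1 - erf ((a - m) / (√2 * σ))) / 2 := by
  have hc : 0 < √2 * σ := by positivity
  simp_rw [gaussianDensity_eq_mul_exp_neg_sq]
  rw [integral_const_mul, integral_Ioi_comp_sub_div (fun u => exp (-u ^ 2)) a m hc,
    integral_Ioi_exp_neg_sq, smul_eq_mul, sqrt_mul zero_le_two]
  have hπ : √π ≠ 0 := by positivity
  field_simp

theorem exp_mul_gaussianDensity (μ x : ℝ) {σ : ℝ} (hσ : σ ≠ 0) :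
    exp x * gaussianDensity μ σ x = exp (μ + σ ^ 2 / 2) * gaussianDensity (μ + σ ^ 2) σ x := by
  have hsquare : x + -(x - μ) ^ 2 / (2 * σ ^ 2)
      = μ + σ ^ 2 / 2 + -(x - (μ + σ ^ 2)) ^ 2 / (2 * σ ^ 2) := by
    field_simp
    ring
  simp only [gaussianDensity]
  rw [mul_left_comm, ← exp_add, hsquare, exp_add]
  ring

theorem stmt2_general (μ σ p y : ℝ) (hσ : 0 < σ)
    (hy : erf y = 1 - 2 * p) :
    ∫ x in Set.Ioi (μ + Real.sqrt 2 * σ * y + σ ^ 2), Real.exp x * gaussianDensity μ σ x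
      = p * ∫ x, Real.exp x * gaussianDensity μ σ x := by
  have hthreshold : (μ + √2 * σ * y + σ ^ 2 - (μ + σ ^ 2)) / (√2 * σ) = y := by
    field_simp
    ring
  simp_rw [exp_mul_gaussianDensity μ _ hσ.ne']
  rw [integral_const_mul, integral_const_mul, integral_Ioi_gaussianDensity _ _ hσ,
    integral_gaussianDensity _ hσ, hthreshold, hy]
  ring

/-- For Gaussian logits `N(μ, σ²)` and `p ∈ (0,1)`, the threshold
`t = μ + √2·σ·erf⁻¹(1 − 2p) + σ²` (where `y = erf⁻¹(1 − 2p)`, i.e. `erf y = 1 − 2p`)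
satisfies `∫_t^∞ exp x * φ_{μ,σ²} x = p * ∫_ℝ exp x * φ_{μ,σ²} x`; that is, the nucleus
mass `I(t)/I(−∞)` equals `p` exactly at this threshold. -/
theorem stmt2 (μ σ p y : ℝ) (hσ : 0 < σ) (hp0 : 0 < p) (hp1 : p < 1)
    (hy : erf y = 1 - 2 * p) :
    ∫ x in Set.Ioi (μ + Real.sqrt 2 * σ * y + σ ^ 2), Real.exp x * gaussianDensity μ σ x
      = p * ∫ x, Real.exp x * gaussianDensity μ σ x :=
  stmt2_general μ σ p y hσ hy
end

section
/- (Temperature invariance of top-nσ.) Let l = (l_1, …, l_V) ∈ ℝ^V with V ≥ 1, let n ≥ 0, and for T > 0 define the temperature-scaled logits l′_i = l_i/T. Let M′ = max_j l′_j and σ′ = √((1/V)Σ_j (l′_j − μ′)²) where μ′ = (1/V)Σ_j l′_j. Then for every token i and every T > 0: l′_i ≥ M′ − n·σ′ if and only if l_i ≥ M − n·σ, where M and σ are the maximum and (population) standard deviation of the unscaled logits. Hence the set of tokens selected by top-nσ sampling is independent of the temperature T. -/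
open Real Finset

/-- **Temperature invariance of top-nσ.** Let `l : Fin V → ℝ` with `V ≥ 1`,
`n ≥ 0`, and for `T > 0` define the temperature-scaled logits `l' i = l i / T`. Let
`M' = max j, l' j` and `σ' = √((1/V) ∑ j, (l' j − μ')²)` with `μ' = (1/V) ∑ j, l' j`.
Then for every token `i` and every `T > 0`: `l' i ≥ M' − n·σ' ↔ l i ≥ M − n·σ`, where `M`
and `σ` are the maximum and population standard deviation of the unscaled logits. Hence the
top-nσ candidate set is independent of the temperature `T`. -/
theorem stmt7 (V : ℕ) (hV : 1 ≤ V) (l : Fin V → ℝ) (n : ℝ) (hn : 0 ≤ n)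
    (T : ℝ) (hT : 0 < T) (i : Fin V) :
    let ne : (Finset.univ : Finset (Fin V)).Nonempty :=
      Finset.univ_nonempty_iff.mpr ⟨⟨0, hV⟩⟩
    let l' : Fin V → ℝ := fun j => l j / T
    let M : ℝ := Finset.univ.sup' ne l
    let M' : ℝ := Finset.univ.sup' ne l'
    let μ : ℝ := (1 / (V : ℝ)) * ∑ j, l j
    let μ' : ℝ := (1 / (V : ℝ)) * ∑ j, l' j
    let σ : ℝ := Real.sqrt ((1 / (V : ℝ)) * ∑ j, (l j - μ) ^ 2)
    let σ' : ℝ := Real.sqrt ((1 / (V : ℝ)) * ∑ j, (l' j - μ') ^ 2)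
    (l' i ≥ M' - n * σ' ↔ l i ≥ M - n * σ) := by
  intro ne l' M M' μ μ' σ σ'
  have hT0 : T ≠ 0 := ne_of_gt hT
  have hM' : M' = M / T := by
    have := Finset.comp_sup'_eq_sup'_comp ne (f := l) (g := fun x => x / T)
      (fun x y => by simp [max_div_div_right hT.le])
    simpa [M', M, l', Function.comp] using this.symm
  have hμ' : μ' = μ / T := by
    simp only [μ', μ, l']
    rw [← Finset.sum_div]
    ring
  have hσ' : σ' = σ / T := by
    simp only [σ', σ, hμ', l']
    have : ∀ j : Fin V, (l j / T - μ / T) ^ 2 = (l j - μ) ^ 2 * (1 / T ^ 2) := by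
      intro j; field_simp
    simp_rw [this]
    rw [← Finset.sum_mul, ← mul_assoc, Real.sqrt_mul (by positivity), Real.sqrt_div' 1 (by positivity)]
    rw [Real.sqrt_one, Real.sqrt_sq hT.le]
    field_simp
  rw [hM', hσ']
  simp only [l']
  rw [ge_iff_le, show M / T - n * (σ / T) = (M - n * σ) / T by ring,
    div_le_div_iff_of_pos_right hT, ← ge_iff_le]
end

section
/- Let μ ∈ ℝ, σ > 0, n ∈ ℝ, and M ∈ ℝ, and let φ_{μ,σ²} be the density of N(μ, σ²). Then the nucleus mass of the top-nσ threshold M − nσ under Gaussian logits is (∫_{M−nσ}^{+∞} e^x φ_{μ,σ²}(x) dx) / (∫_ℝ e^x φ_{μ,σ²}(x) dx) = (1/2)·[1 − erf((M − μ − nσ − σ²)/(√2·σ))]. -/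
open MeasureTheory Real

lemma exp_mul_gaussian (μ σ x : ℝ) (hσ : σ ≠ 0) :
    Real.exp x * gaussianDensity μ σ x
      = Real.exp (μ + σ ^ 2 / 2) * gaussianDensity (μ + σ ^ 2) σ x := by
  simp only [gaussianDensity]
  rw [mul_left_comm, ← Real.exp_add, mul_left_comm, ← Real.exp_add]
  congr 2
  field_simp
  ring

lemma gaussian_total (m σ : ℝ) (hσ : 0 < σ) :
    ∫ x, gaussianDensity m σ x = 1 := by
  simp only [gaussianDensity]
  rw [MeasureTheory.integral_const_mul]
  have h1 : (fun x : ℝ => Real.exp (-(x - m) ^ 2 / (2 * σ ^ 2)))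
      = fun x : ℝ => (fun y : ℝ => Real.exp (-(2 * σ ^ 2)⁻¹ * y ^ 2)) (x - m) := by
    funext x
    congr 1
    field_simp
  rw [h1, integral_sub_right_eq_self (fun y : ℝ => Real.exp (-(2 * σ ^ 2)⁻¹ * y ^ 2)) m,
    integral_gaussian]
  have hσ2 : (0:ℝ) < 2 * σ ^ 2 := by positivity
  rw [show π / (2 * σ ^ 2)⁻¹ = π * (2 * σ ^ 2) by field_simp]
  rw [show π * (2 * σ ^ 2) = (σ * Real.sqrt (2 * π)) ^ 2 by
    rw [mul_pow, Real.sq_sqrt (by positivity)]; ring]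
  rw [Real.sqrt_sq (by positivity)]
  field_simp

lemma gaussian_tail (m σ t : ℝ) (hσ : 0 < σ) :
    ∫ x in Set.Ioi t, gaussianDensity m σ x
      = (1 / 2) * (1 - erf ((t - m) / (Real.sqrt 2 * σ))) := by
  have h2 : (0:ℝ) < Real.sqrt 2 * σ := by positivity
  simp only [gaussianDensity]
  rw [MeasureTheory.integral_const_mul]
  -- shift
  have hshift := (measurePreserving_add_right volume m).setIntegral_preimage_emb
    (measurableEmbedding_addRight m)
    (fun x : ℝ => Real.exp (-(x - m) ^ 2 / (2 * σ ^ 2))) (Set.Ioi t)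
  simp only [Set.preimage_add_const_Ioi, add_sub_cancel_right] at hshift
  rw [← hshift]
  -- scale
  have hscale := integral_comp_mul_right_Ioi (fun y : ℝ => Real.exp (-y ^ 2)) (t - m)
    (inv_pos.mpr h2)
  have h3 : (fun x : ℝ => Real.exp (-x ^ 2 / (2 * σ ^ 2)))
      = fun x : ℝ => (fun y : ℝ => Real.exp (-y ^ 2)) (x * (Real.sqrt 2 * σ)⁻¹) := by
    funext x
    simp only
    congr 1
    rw [mul_pow, inv_pow, mul_pow, Real.sq_sqrt (by norm_num : (0:ℝ) ≤ 2)]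
    rw [div_eq_mul_inv, neg_mul]
  rw [h3, hscale]
  -- split the tail integral
  set a : ℝ := (t - m) * (Real.sqrt 2 * σ)⁻¹ with ha
  have hint : MeasureTheory.Integrable (fun x : ℝ => Real.exp (-x ^ 2)) := by
    simpa using integrable_exp_neg_mul_sq (one_pos)
  have hsplit : (∫ x in Set.Iic a, Real.exp (-x ^ 2))
      + (∫ x in Set.Ioi a, Real.exp (-x ^ 2)) = Real.sqrt π := by
    have h := MeasureTheory.integral_add_compl (measurableSet_Iic (a := a)) hint
    rw [Set.compl_Iic] at h
    rw [h]
    simpa using integral_gaussian 1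
  have hIic : (∫ x in Set.Iic a, Real.exp (-x ^ 2))
      = Real.sqrt π / 2 + ∫ u in (0:ℝ)..a, Real.exp (-u ^ 2) := by
    have h0 : (∫ x in Set.Iic (0:ℝ), Real.exp (-x ^ 2)) = Real.sqrt π / 2 := by
      have := integral_gaussian_Ioi 1
      have hsplit0 : (∫ x in Set.Iic (0:ℝ), Real.exp (-x ^ 2))
          + (∫ x in Set.Ioi (0:ℝ), Real.exp (-x ^ 2)) = Real.sqrt π := by
        have h := MeasureTheory.integral_add_compl (measurableSet_Iic (a := (0:ℝ))) hint
        rw [Set.compl_Iic] at h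
        rw [h]
        simpa using integral_gaussian 1
      have hci : (∫ x in Set.Ioi (0:ℝ), Real.exp (-x ^ 2)) = Real.sqrt π / 2 := by
        simpa using integral_gaussian_Ioi 1
      linarith
    have := intervalIntegral.integral_Iic_sub_Iic
      (hint.integrableOn (s := Set.Iic (0:ℝ))) (hint.integrableOn (s := Set.Iic a))
      (f := fun x : ℝ => Real.exp (-x ^ 2)) (μ := volume)
    rw [h0] at this
    linarith
  have hIoi : (∫ x in Set.Ioi a, Real.exp (-x ^ 2))
      = Real.sqrt π / 2 - ∫ u in (0:ℝ)..a, Real.exp (-u ^ 2) := by linarith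
  rw [hIoi]
  have hπ : (0:ℝ) < Real.sqrt π := Real.sqrt_pos.mpr Real.pi_pos
  have harg : a = (t - m) / (Real.sqrt 2 * σ) := by rw [ha, div_eq_mul_inv]
  rw [erf, ← harg]
  have hs2 : Real.sqrt (2 * π) = Real.sqrt 2 * Real.sqrt π := Real.sqrt_mul (by norm_num) _
  rw [smul_eq_mul, inv_inv, hs2]
  have h2' : Real.sqrt 2 ≠ 0 := by positivity
  field_simp

/-- For Gaussian logits `N(μ, σ²)` (`σ > 0`), any `n ∈ ℝ`, `M ∈ ℝ`,
the nucleus mass of the top-nσ threshold `M − nσ` is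
`(∫_{M−nσ}^∞ exp x * φ_{μ,σ²} x) / (∫_ℝ exp x * φ_{μ,σ²} x)
  = (1/2)·[1 − erf((M − μ − nσ − σ²)/(√2·σ))]`. -/
theorem stmt8 (μ σ n M : ℝ) (hσ : 0 < σ) :
    (∫ x in Set.Ioi (M - n * σ), Real.exp x * gaussianDensity μ σ x)
        / (∫ x, Real.exp x * gaussianDensity μ σ x)
      = (1 / 2) * (1 - erf ((M - μ - n * σ - σ ^ 2) / (Real.sqrt 2 * σ))) := by
  have hkey : ∀ x, Real.exp x * gaussianDensity μ σ x
      = Real.exp (μ + σ ^ 2 / 2) * gaussianDensity (μ + σ ^ 2) σ x :=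
    fun x => exp_mul_gaussian μ σ x hσ.ne'
  simp only [hkey]
  rw [MeasureTheory.integral_const_mul, MeasureTheory.integral_const_mul,
    gaussian_total _ _ hσ, mul_one,
    mul_div_cancel_left₀ _ (Real.exp_pos _).ne', gaussian_tail _ _ _ hσ,
    show M - n * σ - (μ + σ ^ 2) = M - μ - n * σ - σ ^ 2 by ring]
end
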